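/- Let r ≥ 1, 0<q<1, and let b = (b_1,…,b_r), c = (c_1,…,c_r) be real parameters with b_j > c_j > 0 for j = 1,…,r. Fix n ∈ ℕ. Then the finite sequence k ↦ W_{n,k} = ∏_{j=1}^r (q^{b_j};q)_k (q^{b_j};q)_{n-k} / ((q^{b_j-c_j};q)_k (q^{b_j+c_j};q)_{n-k}) is increasing for 0 ≤ k ≤ n; equivalently, for 0 ≤ k ≤ n-1 one has W_{n,k+1}/W_{n,k} = ∏_{j=1}^r [(1-q^{b_j+k})/(1-q^{b_j-c_j+k})]·[(1-q^{b_j+c_j+n-k-1})/(1-q^{b_j+n-k-1})] ≥ 1. -/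

import Mathlib

/-- The q-shifted factorial `(a;q)_n = ∏_{k=0}^{n-1} (1 - a q^k)`. -/
noncomputable def qPoch (q a : ℝ) (n : ℕ) : ℝ :=
  ∏ k ∈ Finset.range n, (1 - a * q ^ k)

/-- `W_{n,k} = ∏_{j=1}^r (q^{b_j};q)_k (q^{b_j};q)_{n-k}
      / ((q^{b_j-c_j};q)_k (q^{b_j+c_j};q)_{n-k})`. -/
noncomputable def W (q : ℝ) (r : ℕ) (b c : Fin r → ℝ) (n k : ℕ) : ℝ :=
  ∏ j, qPoch q (q ^ b j) k * qPoch q (q ^ b j) (n - k) /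
    (qPoch q (q ^ (b j - c j)) k * qPoch q (q ^ (b j + c j)) (n - k))

/-! Moving one step from `k` to `k + 1` changes one factor of each q-shifted factorial in `W`,
so `W_{n,k+1} / W_{n,k}` is a product of simple quotients; each is `≥ 1` because
`q^{b_j + c_j} ≤ q^{b_j} ≤ q^{b_j - c_j} < 1`. -/

lemma qPoch_succ (q a : ℝ) (n : ℕ) : qPoch q a (n + 1) = qPoch q a n * (1 - a * q ^ n) :=
  Finset.prod_range_succ _ _

section

variable {q a : ℝ}

lemma one_sub_mul_pow_pos (hq0 : 0 ≤ q) (hq1 : q ≤ 1) (ha : a < 1) (i : ℕ) :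
    0 < 1 - a * q ^ i := by
  have h0 : 0 ≤ q ^ i := pow_nonneg hq0 i
  have h1 : q ^ i ≤ 1 := pow_le_one₀ hq0 hq1
  rcases le_or_gt 0 a with ha0 | ha0 <;> nlinarith

lemma qPoch_pos (hq0 : 0 ≤ q) (hq1 : q ≤ 1) (ha : a < 1) (n : ℕ) : 0 < qPoch q a n :=
  Finset.prod_pos fun i _ => one_sub_mul_pow_pos hq0 hq1 ha i

end

section

variable {q A B C : ℝ}

noncomputable def qPochStepRatio (q A B C : ℝ) (k m : ℕ) : ℝ :=
  (1 - A * q ^ k) / (1 - B * q ^ k) * ((1 - C * q ^ m) / (1 - A * q ^ m))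

lemma qPoch_quot_succ_left (hq0 : 0 ≤ q) (hq1 : q ≤ 1) (hA : A < 1) (hB : B < 1) (hC : C < 1)
    (k m : ℕ) :
    qPoch q A (k + 1) * qPoch q A m / (qPoch q B (k + 1) * qPoch q C m) =
      qPoch q A k * qPoch q A (m + 1) / (qPoch q B k * qPoch q C (m + 1)) *
        qPochStepRatio q A B C k m := by
  have hBk := (qPoch_pos hq0 hq1 hB k).ne'
  have hCm := (qPoch_pos hq0 hq1 hC m).ne'
  have hAm := (one_sub_mul_pow_pos hq0 hq1 hA m).ne'
  have hBk' := (one_sub_mul_pow_pos hq0 hq1 hB k).ne'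
  have hCm' := (one_sub_mul_pow_pos hq0 hq1 hC m).ne'
  simp only [qPochStepRatio, qPoch_succ]
  generalize qPoch q B k = x, qPoch q C m = y, 1 - A * q ^ m = u, 1 - B * q ^ k = v,
    1 - C * q ^ m = w at *
  field_simp

lemma one_le_qPochStepRatio (hq0 : 0 ≤ q) (hq1 : q ≤ 1) (hCA : C ≤ A) (hAB : A ≤ B)
    (hB : B < 1) (k m : ℕ) : 1 ≤ qPochStepRatio q A B C k m := by
  have hqk := pow_nonneg hq0 k
  have hqm := pow_nonneg hq0 m
  have hk : 1 ≤ (1 - A * q ^ k) / (1 - B * q ^ k) := by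
    rw [one_le_div (one_sub_mul_pow_pos hq0 hq1 hB k)]
    nlinarith
  have hm : 1 ≤ (1 - C * q ^ m) / (1 - A * q ^ m) := by
    rw [one_le_div (one_sub_mul_pow_pos hq0 hq1 (hAB.trans_lt hB) m)]
    nlinarith
  exact one_le_mul_of_one_le_of_one_le hk hm

end

section

variable {q : ℝ} {r : ℕ} {b c : Fin r → ℝ}

lemma W_pos (hq0 : 0 < q) (hq1 : q < 1) (hbc : ∀ j, b j > c j) (hc : ∀ j, 0 < c j) (n k : ℕ) :
    0 < W q r b c n k := by
  have hlt : ∀ x : ℝ, 0 < x → q ^ x < 1 := fun x hx => Real.rpow_lt_one hq0.le hq1 hx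
  refine Finset.prod_pos fun j _ => div_pos (mul_pos ?_ ?_) (mul_pos ?_ ?_) <;>
    refine qPoch_pos hq0.le hq1.le (hlt _ ?_) _ <;>
    linarith [hbc j, hc j]

lemma W_succ (hq0 : 0 < q) (hq1 : q < 1) (hbc : ∀ j, b j > c j) (hc : ∀ j, 0 < c j)
    (k m : ℕ) :
    W q r b c (k + 1 + m) (k + 1) = W q r b c (k + 1 + m) k *
      ∏ j, qPochStepRatio q (q ^ b j) (q ^ (b j - c j)) (q ^ (b j + c j)) k m := by
  have hlt : ∀ x : ℝ, 0 < x → q ^ x < 1 := fun x hx => Real.rpow_lt_one hq0.le hq1 hx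
  rw [W, W, ← Finset.prod_mul_distrib, show k + 1 + m - (k + 1) = m by omega,
    show k + 1 + m - k = m + 1 by omega]
  refine Finset.prod_congr rfl fun j _ => ?_
  exact qPoch_quot_succ_left hq0.le hq1.le (hlt _ (by linarith [hbc j, hc j]))
    (hlt _ (by linarith [hbc j])) (hlt _ (by linarith [hbc j, hc j])) k m

lemma one_le_prod_qPochStepRatio (hq0 : 0 < q) (hq1 : q < 1) (hbc : ∀ j, b j > c j)
    (hc : ∀ j, 0 < c j) (k m : ℕ) :
    1 ≤ ∏ j, qPochStepRatio q (q ^ b j) (q ^ (b j - c j)) (q ^ (b j + c j)) k m :=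
  Finset.one_le_prod fun j _ => one_le_qPochStepRatio hq0.le hq1.le
    (Real.rpow_le_rpow_of_exponent_ge hq0 hq1.le (by linarith [hc j]))
    (Real.rpow_le_rpow_of_exponent_ge hq0 hq1.le (by linarith [hc j]))
    (Real.rpow_lt_one hq0.le hq1 (by linarith [hbc j])) k m

end

theorem statement_9_general (r : ℕ) (q : ℝ) (hq0 : 0 < q) (hq1 : q < 1)
    (b c : Fin r → ℝ) (hbc : ∀ j, b j > c j) (hc : ∀ j, 0 < c j) (n : ℕ) :
    ∀ k : ℕ, k + 1 ≤ n →
      W q r b c n k ≤ W q r b c n (k + 1) ∧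
      W q r b c n (k + 1) / W q r b c n k =
        ∏ j, ((1 - q ^ (b j + k)) / (1 - q ^ (b j - c j + k))) *
          ((1 - q ^ (b j + c j + n - k - 1)) / (1 - q ^ (b j + n - k - 1))) ∧
      1 ≤ W q r b c n (k + 1) / W q r b c n k := by
  intro k hk
  obtain ⟨m, rfl⟩ : ∃ m, n = k + 1 + m := ⟨n - (k + 1), by omega⟩
  have hWk := W_pos hq0 hq1 hbc hc (k + 1 + m) k
  have hP := one_le_prod_qPochStepRatio hq0 hq1 hbc hc k m
  have hratio : W q r b c (k + 1 + m) (k + 1) / W q r b c (k + 1 + m) k =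
      ∏ j, qPochStepRatio q (q ^ b j) (q ^ (b j - c j)) (q ^ (b j + c j)) k m := by
    rw [W_succ hq0 hq1 hbc hc, mul_div_cancel_left₀ _ hWk.ne']
  have hexp : ∀ x : ℝ, q ^ (x + ↑(k + 1 + m) - k - 1) = q ^ x * q ^ m := fun x => by
    rw [← Real.rpow_add_natCast hq0.ne']
    push_cast
    ring_nf
  refine ⟨?_, ?_, hratio ▸ hP⟩
  · rw [W_succ hq0 hq1 hbc hc]
    exact le_mul_of_one_le_right hWk.le hP
  · simp only [hratio, hexp, Real.rpow_add_natCast hq0.ne', qPochStepRatio]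

theorem statement_9 (r : ℕ) (hr : 1 ≤ r) (q : ℝ) (hq0 : 0 < q) (hq1 : q < 1)
    (b c : Fin r → ℝ) (hbc : ∀ j, b j > c j) (hc : ∀ j, 0 < c j) (n : ℕ) :
    ∀ k : ℕ, k + 1 ≤ n →
      W q r b c n k ≤ W q r b c n (k + 1) ∧
      W q r b c n (k + 1) / W q r b c n k =
        ∏ j, ((1 - q ^ (b j + k)) / (1 - q ^ (b j - c j + k))) *
          ((1 - q ^ (b j + c j + n - k - 1)) / (1 - q ^ (b j + n - k - 1))) ∧
      1 ≤ W q r b c n (k + 1) / W q r b c n k :=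
  statement_9_general r q hq0 hq1 b c hbc hc n
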